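/- Let F be a field and G = GL(4, F). With B the Borel, N its unipotent radical, and w_1, w_2, w_3 the simple reflections, suppose γ ∈ B w_1w_2w_3w_2w_1 N has Bruhat normal form γ = u_1 t w_1w_2w_3w_2w_1 u_2 where u_1 has (1,2)-entry a and u_2 has (1,2)-entry b. Set δ = w_1·n(−a), where n(−a) ∈ N_1 is the elementary unipotent with (1,2)-entry −a. Then δ γ δ^{-1} ∈ B w_2w_3w_2 N if a + b = 0, and δ γ δ^{-1} ∈ B w_2w_3w_2w_1 N if a + b ≠ 0. -/

import Mathlib

open Matrix

variable {F : Type*} [Field F]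

/-- The permutation matrix of `σ` (column convention). -/
def permM {n : ℕ} (F : Type*) [Field F] (σ : Equiv.Perm (Fin n)) :
    Matrix (Fin n) (Fin n) F :=
  Matrix.of fun i j => if σ j = i then 1 else 0

/-- `g` lies in the Borel subgroup `B` of upper triangular matrices. -/
def inB {n : ℕ} (g : GL (Fin n) F) : Prop :=
  ∀ i j : Fin n, j < i → (g : Matrix (Fin n) (Fin n) F) i j = 0

/-- `g` lies in the unipotent upper triangular subgroup `N`. -/
def inN {n : ℕ} (g : GL (Fin n) F) : Prop :=
  inB g ∧ ∀ i : Fin n, (g : Matrix (Fin n) (Fin n) F) i i = 1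

/-- The Bruhat cell `B·w·N`. -/
def cell {n : ℕ} (w : GL (Fin n) F) : Set (GL (Fin n) F) :=
  {γ | ∃ b u : GL (Fin n) F, inB b ∧ inN u ∧ γ = b * w * u}

/-- `g` is the elementary unipotent `n(c) ∈ N₁` with `(1,2)`-entry `c`
(0-based entry `(0,1)`), i.e. the identity except at that entry, where it is `c`. -/
def isElemN1 (g : GL (Fin 4) F) (c : F) : Prop :=
  (g : Matrix (Fin 4) (Fin 4) F) 0 1 = c ∧
    ∀ i j : Fin 4, ¬(i = 0 ∧ j = 1) →
      (g : Matrix (Fin 4) (Fin 4) F) i j = if i = j then 1 else 0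

/-!
Conjugation by `δ = w₁ n(-a)` moves the two outer copies of `w₁` in the Weyl word onto the
unipotent factors:
`δγδ⁻¹ = p · w₂w₃w₂ · (w₁ n(a+b) w₁⁻¹) · (w₁ q w₁⁻¹)` with `p ∈ B` and `q = n(a+b)⁻¹ u₂ n(a) ∈ N`.
The `(1,2)`-entry of `q` vanishes, so `w₁ q w₁⁻¹ ∈ N`. If `a + b = 0` the middle factor is just
`w₂w₃w₂`. If `c = a + b ≠ 0`, then `w₂w₃w₂ · w₁ n(c) w₁⁻¹ = b · w₂w₃w₂w₁ · n(c⁻¹)`, where `b` is the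
conjugate by `w₂w₃w₂w₁` of the block matrix `n(c) w₁ n(-c⁻¹) = [[c, 0], [1, -c⁻¹]]`; the
permutation `w₂w₃w₂w₁` sends `2 ↦ 1` and `1 ↦ 4`, so the subdiagonal entry at `(2,1)` lands at
`(1,4)` and `b ∈ B`.
-/

open Equiv

section Permutation

variable {n : ℕ}

lemma permM_eq_permMatrix (σ : Perm (Fin n)) : permM F σ = σ⁻¹.permMatrix F := by
  ext i j
  simp only [permM, PEquiv.toMatrix_apply, Perm.inv_def, toPEquiv_apply, Option.mem_def,
    Option.some.injEq, of_apply]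
  exact if_congr (σ.symm_apply_eq.trans eq_comm).symm rfl rfl

lemma permM_mul_permM (σ τ : Perm (Fin n)) : permM F σ * permM F τ = permM F (σ * τ) := by
  simp only [permM_eq_permMatrix, _root_.mul_inv_rev, permMatrix_mul]

lemma permM_one : permM F (1 : Perm (Fin n)) = 1 := by
  simp [permM_eq_permMatrix]

lemma permM_mul (σ : Perm (Fin n)) (M : Matrix (Fin n) (Fin n) F) :
    permM F σ * M = M.submatrix σ.symm id := by
  rw [permM_eq_permMatrix]
  exact PEquiv.toMatrix_toPEquiv_mul _ _

lemma mul_permM (σ : Perm (Fin n)) (M : Matrix (Fin n) (Fin n) F) :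
    M * permM F σ = M.submatrix id σ := by
  rw [permM_eq_permMatrix]
  exact PEquiv.mul_toMatrix_toPEquiv _ _

variable {w : GL (Fin n) F} {σ : Perm (Fin n)}

lemma coe_inv_of_coe_eq_permM (hw : (w : Matrix (Fin n) (Fin n) F) = permM F σ) :
    ((w⁻¹ : GL (Fin n) F) : Matrix (Fin n) (Fin n) F) = permM F σ⁻¹ := by
  calc ((w⁻¹ : GL (Fin n) F) : Matrix (Fin n) (Fin n) F)
      = (w⁻¹ : GL (Fin n) F) * (permM F σ * permM F σ⁻¹) := by
        rw [permM_mul_permM, mul_inv_cancel, permM_one, Matrix.mul_one]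
    _ = permM F σ⁻¹ := by rw [← hw, ← Matrix.mul_assoc, Units.inv_mul, Matrix.one_mul]

lemma coe_conj_of_coe_eq_permM (hw : (w : Matrix (Fin n) (Fin n) F) = permM F σ)
    (g : GL (Fin n) F) :
    ((w * g * w⁻¹ : GL (Fin n) F) : Matrix (Fin n) (Fin n) F) =
      (g : Matrix (Fin n) (Fin n) F).submatrix σ.symm σ.symm := by
  rw [Units.val_mul, Units.val_mul, coe_inv_of_coe_eq_permM hw, hw, permM_mul, mul_permM]
  rfl

lemma inB_conj_iff (hw : (w : Matrix (Fin n) (Fin n) F) = permM F σ) (g : GL (Fin n) F) :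
    inB (w * g * w⁻¹) ↔ ∀ k l, σ l < σ k → (g : Matrix (Fin n) (Fin n) F) k l = 0 := by
  simp only [inB, coe_conj_of_coe_eq_permM hw, submatrix_apply]
  refine ⟨fun h k l hkl => by simpa using h (σ k) (σ l) hkl, fun h i j hij => h _ _ ?_⟩
  simpa using hij

lemma inB_conj_of_diagonal (hw : (w : Matrix (Fin n) (Fin n) F) = permM F σ)
    {t : GL (Fin n) F} (ht : ∀ i j, i ≠ j → (t : Matrix (Fin n) (Fin n) F) i j = 0) :
    inB (w * t * w⁻¹) :=
  (inB_conj_iff hw t).2 fun _ _ hlk => ht _ _ fun h => (h ▸ hlk).false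

lemma inN_conj_of_inversions (hw : (w : Matrix (Fin n) (Fin n) F) = permM F σ)
    {g : GL (Fin n) F} (hg : inN g)
    (hinv : ∀ k l, k < l → σ l < σ k → (g : Matrix (Fin n) (Fin n) F) k l = 0) :
    inN (w * g * w⁻¹) := by
  refine ⟨(inB_conj_iff hw g).2 fun k l hσ => ?_, fun i => ?_⟩
  · rcases lt_trichotomy k l with hkl | rfl | hkl
    · exact hinv k l hkl hσ
    · exact (lt_irrefl _ hσ).elim
    · exact hg.1 k l hkl
  · rw [coe_conj_of_coe_eq_permM hw, submatrix_apply]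
    exact hg.2 _

end Permutation

section BorelCell

variable {n : ℕ}

lemma inB_mul {g h : GL (Fin n) F} (hg : inB g) (hh : inB h) : inB (g * h) := by
  intro i j hij
  rw [Units.val_mul, mul_apply]
  refine Finset.sum_eq_zero fun k _ => ?_
  rcases lt_or_ge k i with hki | hik
  · rw [hg i k hki, zero_mul]
  · rw [hh k j (hij.trans_le hik), mul_zero]

lemma inN_mul {g h : GL (Fin n) F} (hg : inN g) (hh : inN h) : inN (g * h) := by
  refine ⟨inB_mul hg.1 hh.1, fun i => ?_⟩
  rw [Units.val_mul, mul_apply, Finset.sum_eq_single i]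
  · rw [hg.2 i, hh.2 i, one_mul]
  · intro k _ hki
    rcases lt_or_gt_of_ne hki with hki | hik
    · rw [hg.1 i k hki, zero_mul]
    · rw [hh.1 k i hik, mul_zero]
  · exact fun h => absurd (Finset.mem_univ i) h

lemma inN_one : inN (1 : GL (Fin n) F) :=
  ⟨fun _ _ hij => by simpa using one_apply_ne hij.ne', fun _ => by simp⟩

lemma self_mem_cell (w : GL (Fin n) F) : w ∈ cell w :=
  ⟨1, 1, inN_one.1, inN_one, by simp⟩

lemma mul_mem_cell {w γ b u : GL (Fin n) F} (hb : inB b) (hγ : γ ∈ cell w) (hu : inN u) :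
    b * γ * u ∈ cell w := by
  obtain ⟨b', u', hb', hu', rfl⟩ := hγ
  exact ⟨b * b', u' * u, inB_mul hb hb', inN_mul hu' hu, by group⟩

end BorelCell

section Transvection

variable {n : ℕ} {i j : Fin n}

def transvectionGL (hij : i ≠ j) (c : F) : GL (Fin n) F :=
  SpecialLinearGroup.toGL (SpecialLinearGroup.transvection hij c)

lemma coe_transvectionGL (hij : i ≠ j) (c : F) :
    (transvectionGL hij c : Matrix (Fin n) (Fin n) F) = transvection i j c :=
  rfl

lemma transvectionGL_inv (hij : i ≠ j) (c : F) :
    (transvectionGL hij c)⁻¹ = transvectionGL hij (-c) := by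
  rw [transvectionGL, ← map_inv, SpecialLinearGroup.transvection_inv, transvectionGL]

lemma transvectionGL_zero (hij : i ≠ j) : transvectionGL hij (0 : F) = 1 := by
  simp [transvectionGL]

lemma inN_transvectionGL (hij : i < j) (c : F) : inN (transvectionGL hij.ne c) := by
  refine ⟨fun k l hlk => ?_, fun k => ?_⟩
  · have hne : ¬(i = k ∧ j = l) := by rintro ⟨rfl, rfl⟩; exact (hij.trans hlk).false
    rw [coe_transvectionGL, transvection, Matrix.add_apply, one_apply_ne hlk.ne',
      single_apply_of_ne _ _ _ _ _ hne, zero_add]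
  · have hne : ¬(i = k ∧ j = k) := by rintro ⟨rfl, rfl⟩; exact hij.false
    rw [coe_transvectionGL, transvection, Matrix.add_apply, one_apply_eq,
      single_apply_of_ne _ _ _ _ _ hne, add_zero]

variable {g : GL (Fin n) F}

lemma inN.transvectionGL_mul_apply (hg : inN g) (hij : i < j) (c : F) :
    ((transvectionGL hij.ne c * g : GL (Fin n) F) : Matrix (Fin n) (Fin n) F) i j =
      (g : Matrix (Fin n) (Fin n) F) i j + c := by
  rw [Units.val_mul, coe_transvectionGL, transvection_mul_apply_same, hg.2, mul_one]

lemma inN.mul_transvectionGL_apply (hg : inN g) (hij : i < j) (c : F) :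
    ((g * transvectionGL hij.ne c : GL (Fin n) F) : Matrix (Fin n) (Fin n) F) i j =
      (g : Matrix (Fin n) (Fin n) F) i j + c := by
  rw [Units.val_mul, coe_transvectionGL, mul_transvection_apply_same, hg.2, mul_one]

end Transvection

section GL4

abbrev elemN1 (c : F) : GL (Fin 4) F :=
  transvectionGL (show (0 : Fin 4) < 1 by decide).ne c

lemma inN_elemN1 (c : F) : inN (elemN1 c) :=
  inN_transvectionGL (by decide) c

lemma elemN1_inv (c : F) : (elemN1 c)⁻¹ = elemN1 (-c) :=
  transvectionGL_inv _ c

lemma elemN1_zero : elemN1 (0 : F) = 1 :=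
  transvectionGL_zero _

lemma eq_elemN1_of_isElemN1 {ν : GL (Fin 4) F} {c : F} (h : isElemN1 ν c) : ν = elemN1 c := by
  ext i j
  rw [coe_transvectionGL]
  by_cases hij : i = 0 ∧ j = 1
  · obtain ⟨rfl, rfl⟩ := hij
    simp [h.1, transvection]
  · rw [h.2 i j hij]
    fin_cases i <;> fin_cases j <;> simp_all [transvection, one_apply]

lemma swap01_inversions : ∀ k l : Fin 4, k < l → swap 0 1 l < swap 0 1 k → k = 0 ∧ l = 1 := by
  decide

variable {w₁ w₂ w₃ : GL (Fin 4) F}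

lemma inN_conj_swap01 (hw₁ : (w₁ : Matrix (Fin 4) (Fin 4) F) = permM F (swap 0 1))
    {g : GL (Fin 4) F} (hg : inN g) (h01 : (g : Matrix (Fin 4) (Fin 4) F) 0 1 = 0) :
    inN (w₁ * g * w₁⁻¹) :=
  inN_conj_of_inversions hw₁ hg fun k l hkl hσ => by
    obtain ⟨rfl, rfl⟩ := swap01_inversions k l hkl hσ
    exact h01

lemma elemN1_mul_swap01_mul_elemN1 {c : F} (hc : c ≠ 0) :
    transvection 0 1 c * permM F (swap 0 1) * transvection 0 1 (-c⁻¹) =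
      !![c, 0, 0, 0; 1, -c⁻¹, 0, 0; 0, 0, 1, 0; 0, 0, 0, 1] := by
  ext i j
  fin_cases i <;> fin_cases j <;>
    simp [mul_apply, Fin.sum_univ_four, transvection, permM, one_apply, single_apply,
      swap_apply_def, hc]

lemma mul_conj_elemN1_mem_cell (hw₁ : (w₁ : Matrix (Fin 4) (Fin 4) F) = permM F (swap 0 1))
    (hw₂ : (w₂ : Matrix (Fin 4) (Fin 4) F) = permM F (swap 1 2))
    (hw₃ : (w₃ : Matrix (Fin 4) (Fin 4) F) = permM F (swap 2 3)) {c : F} (hc : c ≠ 0) :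
    w₂ * w₃ * w₂ * (w₁ * elemN1 c * w₁⁻¹) ∈ cell (w₂ * w₃ * w₂ * w₁) := by
  set w := w₂ * w₃ * w₂ * w₁
  have hw : (w : Matrix (Fin 4) (Fin 4) F) =
      permM F (swap 1 2 * swap 2 3 * swap 1 2 * swap 0 1) := by
    simp only [w, Units.val_mul, hw₁, hw₂, hw₃, permM_mul_permM]
  set b := w * (elemN1 c * w₁⁻¹ * (elemN1 c⁻¹)⁻¹) * w⁻¹
  have hb : inB b := by
    refine (inB_conj_iff hw _).2 fun k l hσ => ?_
    rw [Units.val_mul, Units.val_mul, transvectionGL_inv, coe_transvectionGL,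
      coe_transvectionGL, coe_inv_of_coe_eq_permM hw₁, swap_inv,
      elemN1_mul_swap01_mul_elemN1 hc]
    have hkl : k ≠ l := by rintro rfl; exact lt_irrefl _ hσ
    have h10 : ¬(k = 1 ∧ l = 0) := by rintro ⟨rfl, rfl⟩; exact absurd hσ (by decide)
    fin_cases k <;> fin_cases l <;> simp_all
  refine ⟨b, elemN1 c⁻¹, hb, inN_elemN1 _, ?_⟩
  simp only [b, w]
  group

end GL4

/-- In `GL(4, F)`, let `γ ∈ B·w₁w₂w₃w₂w₁·N` have Bruhat normal form
`γ = u₁ t w₁w₂w₃w₂w₁ u₂` with `a` the `(1,2)`-entry of `u₁` and `b` the `(1,2)`-entry of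
`u₂`.  Put `δ = w₁·n(−a)` with `n(−a) ∈ N₁`.  Then `δγδ⁻¹ ∈ B·w₂w₃w₂·N` if `a + b = 0` and
`δγδ⁻¹ ∈ B·w₂w₃w₂w₁·N` if `a + b ≠ 0`. -/
theorem bruhat_cell_w1w2w3w2w1_conjugation (w₁ w₂ w₃ : GL (Fin 4) F)
    (hw₁ : (w₁ : Matrix (Fin 4) (Fin 4) F) = permM F (Equiv.swap 0 1))
    (hw₂ : (w₂ : Matrix (Fin 4) (Fin 4) F) = permM F (Equiv.swap 1 2))
    (hw₃ : (w₃ : Matrix (Fin 4) (Fin 4) F) = permM F (Equiv.swap 2 3))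
    (γ u₁ t u₂ : GL (Fin 4) F) (hu₁ : inN u₁)
    (ht : ∀ i j : Fin 4, i ≠ j → (t : Matrix (Fin 4) (Fin 4) F) i j = 0)
    (hu₂ : inN u₂)
    (hγ : γ = u₁ * t * (w₁ * w₂ * w₃ * w₂ * w₁) * u₂)
    (a b : F) (ha : a = (u₁ : Matrix (Fin 4) (Fin 4) F) 0 1)
    (hb : b = (u₂ : Matrix (Fin 4) (Fin 4) F) 0 1)
    (ν : GL (Fin 4) F) (hν : isElemN1 ν (-a)) :
    (a + b = 0 → (w₁ * ν) * γ * (w₁ * ν)⁻¹ ∈ cell (w₂ * w₃ * w₂)) ∧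
    (a + b ≠ 0 → (w₁ * ν) * γ * (w₁ * ν)⁻¹ ∈ cell (w₂ * w₃ * w₂ * w₁)) := by
  obtain rfl := eq_elemN1_of_isElemN1 hν
  have hw₁_inv : w₁⁻¹ = w₁ := Units.ext <| by rw [coe_inv_of_coe_eq_permM hw₁, swap_inv, hw₁]
  set q := (elemN1 (a + b))⁻¹ * (u₂ * (elemN1 (-a))⁻¹)
  have key : (w₁ * elemN1 (-a)) * γ * (w₁ * elemN1 (-a))⁻¹ =
      (w₁ * (elemN1 (-a) * u₁) * w₁⁻¹ * (w₁ * t * w₁)) *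
        (w₂ * w₃ * w₂ * (w₁ * elemN1 (a + b) * w₁⁻¹)) * (w₁ * q * w₁⁻¹) := by
    rw [hγ]; simp only [q]; group
  have hp : inB (w₁ * (elemN1 (-a) * u₁) * w₁⁻¹ * (w₁ * t * w₁)) := by
    have ht' := inB_conj_of_diagonal hw₁ ht
    rw [hw₁_inv] at ht'
    refine inB_mul (inN_conj_swap01 hw₁ (inN_mul (inN_elemN1 _) hu₁) ?_).1 ht'
    rw [hu₁.transvectionGL_mul_apply (by decide), ← ha, add_neg_cancel]
  have hq : inN (w₁ * q * w₁⁻¹) := by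
    have hu₂' : inN (u₂ * elemN1 a) := inN_mul hu₂ (inN_elemN1 a)
    simp only [q, elemN1_inv, neg_neg]
    refine inN_conj_swap01 hw₁ (inN_mul (inN_elemN1 _) hu₂') ?_
    rw [hu₂'.transvectionGL_mul_apply (by decide), hu₂.mul_transvectionGL_apply (by decide), ← hb]
    ring
  rw [key]
  refine ⟨fun hab => ?_, fun hab => mul_mem_cell hp (mul_conj_elemN1_mem_cell hw₁ hw₂ hw₃ hab) hq⟩
  rw [hab, elemN1_zero, mul_one, mul_inv_cancel, mul_one]
  exact mul_mem_cell hp (self_mem_cell _) hq
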